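/- The inequality θ̲·δB̲·z⁺ + θ̲·δB̄·z⁻ + δB̲·θ − δp ≤ θ̲·δB̲ is valid on P₀ ∪ P₁ ∪ P₂, and hence on conv(P₀ ∪ P₁ ∪ P₂). -/

import Mathlib

abbrev Pt := ℝ × ℝ × ℝ × ℝ × ℝ

def P0 (tl tu : ℝ) : Set Pt :=
  {p | p.1 = 0 ∧ p.2.1 = 0 ∧ p.2.2.1 = 0 ∧ p.2.2.2.2 = 0 ∧ tl ≤ p.2.2.2.1 ∧ p.2.2.2.1 ≤ tu}

def P1 (tu bl bu : ℝ) : Set Pt :=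
  {p | p.1 = 1 ∧ p.2.1 = 1 ∧ p.2.2.1 = 0 ∧ 0 ≤ p.2.2.2.1 ∧ p.2.2.2.1 ≤ tu ∧
    bl * p.2.2.2.1 ≤ p.2.2.2.2 ∧ p.2.2.2.2 ≤ bu * p.2.2.2.1}

def P2 (tl bl bu : ℝ) : Set Pt :=
  {p | p.1 = 1 ∧ p.2.1 = 0 ∧ p.2.2.1 = 1 ∧ tl ≤ p.2.2.2.1 ∧ p.2.2.2.1 ≤ 0 ∧
    bu * p.2.2.2.1 ≤ p.2.2.2.2 ∧ p.2.2.2.2 ≤ bl * p.2.2.2.1}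

theorem le_of_mem_convexHull_of_isLinearMap {𝕜 E β : Type*} [Semiring 𝕜] [PartialOrder 𝕜]
    [AddCommMonoid E] [Module 𝕜 E] [AddCommMonoid β] [PartialOrder β] [IsOrderedAddMonoid β]
    [Module 𝕜 β] [PosSMulMono 𝕜 β] {f : E → β} (hf : IsLinearMap 𝕜 f) {s : Set E} {r : β}
    (hs : ∀ x ∈ s, f x ≤ r) {x : E} (hx : x ∈ convexHull 𝕜 s) : f x ≤ r :=
  convexHull_min hs (convex_halfSpace_le hf r) hx

/-- A point is `p = (ψ, z⁺, z⁻, θ, δp)`. -/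
def cutForm (tl bl bu : ℝ) (p : Pt) : ℝ :=
  tl * bl * p.2.1 + tl * bu * p.2.2.1 + bl * p.2.2.2.1 - p.2.2.2.2

theorem isLinearMap_cutForm (tl bl bu : ℝ) : IsLinearMap ℝ (cutForm tl bl bu) where
  map_add p q := by simp only [cutForm, Prod.snd_add, Prod.fst_add]; ring
  map_smul c p := by simp only [cutForm, Prod.smul_snd, Prod.smul_fst, smul_eq_mul]; ring

theorem cutForm_le_of_mem_P0 {tl tu bl : ℝ} (bu : ℝ) (hbl : bl ≤ 0) {p : Pt}
    (hp : p ∈ P0 tl tu) : cutForm tl bl bu p ≤ tl * bl := by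
  obtain ⟨-, hzp, hzm, hδp, htl, -⟩ := hp
  simp only [cutForm, hzp, hzm, hδp]
  nlinarith

theorem cutForm_le_of_mem_P1 {tu bl bu : ℝ} (tl : ℝ) {p : Pt} (hp : p ∈ P1 tu bl bu) :
    cutForm tl bl bu p ≤ tl * bl := by
  obtain ⟨-, hzp, hzm, -, -, hδp, -⟩ := hp
  simp only [cutForm, hzp, hzm]
  linarith

theorem cutForm_le_of_mem_P2 {tl bl bu : ℝ} (hbu : bl ≤ bu) {p : Pt} (hp : p ∈ P2 tl bl bu) :
    cutForm tl bl bu p ≤ tl * bl := by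
  obtain ⟨-, hzp, hzm, htl, -, hδp, -⟩ := hp
  simp only [cutForm, hzp, hzm]
  -- the slack is `(bu - bl) (θ - tl)` plus the slack of `bu θ ≤ δp`
  nlinarith [mul_nonneg (sub_nonneg.2 hbu) (sub_nonneg.2 htl)]

theorem stmt_10_general (tl tu bl bu : ℝ) (h3 : bl < 0) (h4 : 0 < bu) :
    (∀ p ∈ P0 tl tu ∪ P1 tu bl bu ∪ P2 tl bl bu,
      tl * bl * p.2.1 + tl * bu * p.2.2.1 + bl * p.2.2.2.1 - p.2.2.2.2 ≤ tl * bl) ∧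
    (∀ p ∈ convexHull ℝ (P0 tl tu ∪ P1 tu bl bu ∪ P2 tl bl bu),
      tl * bl * p.2.1 + tl * bu * p.2.2.1 + bl * p.2.2.2.1 - p.2.2.2.2 ≤ tl * bl) := by
  have hvalid : ∀ p ∈ P0 tl tu ∪ P1 tu bl bu ∪ P2 tl bl bu, cutForm tl bl bu p ≤ tl * bl := by
    rintro p ((hp | hp) | hp)
    · exact cutForm_le_of_mem_P0 bu h3.le hp
    · exact cutForm_le_of_mem_P1 tl hp
    · exact cutForm_le_of_mem_P2 (h3.trans h4).le hp
  exact ⟨hvalid, fun p hp => le_of_mem_convexHull_of_isLinearMap (isLinearMap_cutForm tl bl bu)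
    hvalid hp⟩

theorem stmt_10 (tl tu bl bu : ℝ) (h1 : tl < 0) (h2 : 0 < tu) (h3 : bl < 0) (h4 : 0 < bu) :
    (∀ p ∈ P0 tl tu ∪ P1 tu bl bu ∪ P2 tl bl bu,
      tl * bl * p.2.1 + tl * bu * p.2.2.1 + bl * p.2.2.2.1 - p.2.2.2.2 ≤ tl * bl) ∧
    (∀ p ∈ convexHull ℝ (P0 tl tu ∪ P1 tu bl bu ∪ P2 tl bl bu),
      tl * bl * p.2.1 + tl * bu * p.2.2.1 + bl * p.2.2.2.1 - p.2.2.2.2 ≤ tl * bl) :=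
  stmt_10_general tl tu bl bu h3 h4
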